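/- arXiv:1612.01015 — 3 statements merged into one kernel-verified Lean document; each statement's English description precedes it below -/
import Mathlib

section
/- For all natural numbers j, k: (x₁² + x₂²)^{j+k} expanded yields Σ_{j+k=s} binom(s, j) x₁^{2j} x₂^{2k}, and consequently for b₁, b₂ < 0 the double series Σ_{j,k≥0} binom(j+k, j) ((2(j+k)−1)!!/(2(j+k))!!) ∬_{x₁²+x₂²<1} x₁^{2j+n} x₂^{2k+m} exp(b₁x₁² + b₂x₂²) dx₁dx₂ converges absolutely and equals ∬_{x₁²+x₂²<1} x₁^n x₂^m exp(b₁x₁²+b₂x₂²)/√(1−x₁²−x₂²) dx₁dx₂. -/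
/-!
On the disk, `1 / √(1 - x² - y²)` is the binomial series `∑ₛ (2s-1)‼/(2s)‼ (x² + y²)ˢ` of
`(1 - t)^(-1/2)` at `t = x² + y²`; its coefficients are `multichoose (1/2) s`. Expanding each
`(x² + y²)ˢ` binomially gives a double series with nonnegative terms and the same sum. The weight
`xⁿ yᵐ exp (b₁ x² + b₂ y²)` is continuous, hence bounded on the disk, and `1 / √(1 - x² - y²)` is
integrable there (each vertical slice integrates to `π`, by `arcsin`), so dominated convergence
integrates the double series term by term.
-/

open Real Nat MeasureTheory Finset

theorem add_sq_pow_eq_sum_choose {R : Type*} [CommSemiring R] (x y : R) (s : ℕ) :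
    (x ^ 2 + y ^ 2) ^ s =
      ∑ j ∈ range (s + 1), (s.choose j : R) * x ^ (2 * j) * y ^ (2 * (s - j)) := by
  rw [add_pow]
  exact sum_congr rfl fun j _ => by rw [pow_mul, pow_mul]; ring

/-- The `s`-th Taylor coefficient of `(1 - t)^(-1/2)`. At `s = 0` the truncated `2 * 0 - 1 = 0`
still gives `0‼ = 1`. -/
noncomputable def invSqrtCoeff (s : ℕ) : ℝ := ((2 * s - 1)‼ : ℝ) / ((2 * s)‼ : ℝ)

lemma invSqrtCoeff_nonneg (s : ℕ) : 0 ≤ invSqrtCoeff s := by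
  unfold invSqrtCoeff; positivity

lemma invSqrtCoeff_succ (s : ℕ) :
    invSqrtCoeff (s + 1) = invSqrtCoeff s * (2 * s + 1) / (2 * s + 2) := by
  have hodd : 2 * (s + 1) - 1 = 2 * s + 1 := by omega
  have heven : 2 * (s + 1) = 2 * s + 2 := by ring
  have hne : ((2 * s)‼ : ℝ) ≠ 0 := by exact_mod_cast (Nat.doubleFactorial_pos _).ne'
  rw [invSqrtCoeff, invSqrtCoeff, hodd, heven, Nat.doubleFactorial_add_two,
    Nat.doubleFactorial_add_one]
  push_cast
  field_simp

lemma multichoose_one_half (s : ℕ) : Ring.multichoose (1 / 2 : ℝ) s = invSqrtCoeff s := by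
  have hfac : (s ! : ℝ) * invSqrtCoeff s = (ascPochhammer ℝ s).eval (1 / 2) := by
    induction s with
    | zero => simp [invSqrtCoeff]
    | succ s ih =>
      rw [ascPochhammer_succ_eval, ← ih, invSqrtCoeff_succ, Nat.factorial_succ]
      push_cast
      field_simp
      ring
  have h := Ring.factorial_nsmul_multichoose_eq_ascPochhammer (1 / 2 : ℝ) s
  rw [Polynomial.ascPochhammer_smeval_eq_eval, nsmul_eq_mul, ← hfac] at h
  exact mul_left_cancel₀ (by positivity) h

lemma hasSum_invSqrtCoeff_mul_pow {t : ℝ} (ht : |t| < 1) :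
    HasSum (fun s => invSqrtCoeff s * t ^ s) (1 / √(1 - t)) := by
  have h := (one_div_one_sub_rpow_hasFPowerSeriesOnBall_zero (1 / 2)).hasSum
    (y := t) (by simpa [Metric.mem_eball, edist_dist, Real.dist_eq] using ht)
  simpa only [FormalMultilinearSeries.ofScalars_apply_eq, smul_eq_mul, zero_add,
    ← Ring.multichoose_eq, multichoose_one_half, sqrt_eq_rpow] using h

lemma hasSum_of_hasSum_sum_antidiagonal {f : ℕ × ℕ → ℝ} (hf : 0 ≤ f) {a : ℝ}
    (h : HasSum (fun s => ∑ p ∈ antidiagonal s, f p) a) : HasSum f a := by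
  let e := Finset.HasAntidiagonal.sigmaAntidiagonalEquivProd (A := ℕ)
  have hfib (s : ℕ) : HasSum (fun q : antidiagonal s => f q) (∑ p ∈ antidiagonal s, f p) :=
    Finset.hasSum _ f
  have hf_summable : Summable f := by
    refine e.summable_iff.mp ((summable_sigma_of_nonneg fun _ => hf _).mpr
      ⟨fun s => (hfib s).summable, ?_⟩)
    exact h.summable.congr fun s => ((hfib s).tsum_eq).symm
  exact h.unique ((e.hasSum_iff.mpr hf_summable.hasSum).sigma hfib) ▸ hf_summable.hasSum

lemma hasSum_choose_mul_invSqrtCoeff_mul_pow_mul_pow {u v : ℝ} (hu : 0 ≤ u) (hv : 0 ≤ v)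
    (huv : u + v < 1) :
    HasSum (fun jk : ℕ × ℕ => ((jk.1 + jk.2).choose jk.1 : ℝ) * invSqrtCoeff (jk.1 + jk.2) *
      (u ^ jk.1 * v ^ jk.2)) (1 / √(1 - (u + v))) := by
  refine hasSum_of_hasSum_sum_antidiagonal (fun jk => by
    have := invSqrtCoeff_nonneg (jk.1 + jk.2); positivity) ?_
  convert hasSum_invSqrtCoeff_mul_pow (t := u + v) (by rw [abs_lt]; constructor <;> linarith)
    using 2 with s
  rw [(Commute.all u v).add_pow', mul_sum]
  refine sum_congr rfl fun jk hjk => ?_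
  rw [mem_antidiagonal.1 hjk, nsmul_eq_mul]
  ring

lemma hasDerivAt_arcsin_div {c y : ℝ} (hc : 0 < c) (hy : y ∈ Set.Ioo (-c) c) :
    HasDerivAt (fun y => arcsin (y / c)) (1 / √(c ^ 2 - y ^ 2)) y := by
  obtain ⟨hy₁, hy₂⟩ := hy
  have h := (hasDerivAt_arcsin (x := y / c) (by rw [ne_eq, div_eq_iff hc.ne']; linarith)
    (by rw [ne_eq, div_eq_iff hc.ne']; linarith)).comp y ((hasDerivAt_id y).div_const c)
  refine h.congr_deriv ?_
  rw [show 1 - (y / c) ^ 2 = (c ^ 2 - y ^ 2) / c ^ 2 by field_simp, sqrt_div' _ (sq_nonneg c),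
    sqrt_sq hc.le]
  field_simp

lemma integrableOn_inv_sqrt_sq_sub_sq {c : ℝ} (hc : 0 < c) :
    IntegrableOn (fun y => 1 / √(c ^ 2 - y ^ 2)) (Set.Ioo (-c) c) :=
  (intervalIntegral.integrableOn_deriv_of_nonneg (by fun_prop) (fun _ => hasDerivAt_arcsin_div hc)
    fun y _ => by positivity).mono_set Set.Ioo_subset_Ioc_self

lemma integral_inv_sqrt_sq_sub_sq {c : ℝ} (hc : 0 < c) :
    ∫ y in Set.Ioo (-c) c, 1 / √(c ^ 2 - y ^ 2) = π := by
  have hle : -c ≤ c := by linarith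
  have hFTC := intervalIntegral.integral_eq_sub_of_hasDeriv_right_of_le hle (by fun_prop)
    (fun y hy => (hasDerivAt_arcsin_div hc hy).hasDerivWithinAt)
    ((intervalIntegrable_iff_integrableOn_Ioo_of_le hle).mpr (integrableOn_inv_sqrt_sq_sub_sq hc))
  rw [intervalIntegral.integral_of_le hle, integral_Ioc_eq_integral_Ioo] at hFTC
  rw [hFTC, div_self hc.ne', neg_div, div_self hc.ne', arcsin_one, arcsin_neg, arcsin_one]
  ring

def openUnitDisk : Set (ℝ × ℝ) := {p | p.1 ^ 2 + p.2 ^ 2 < 1}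

lemma measurableSet_openUnitDisk : MeasurableSet openUnitDisk :=
  (isOpen_lt (by fun_prop) continuous_const).measurableSet

lemma openUnitDisk_subset_Ioo_prod_univ : openUnitDisk ⊆ Set.Ioo (-1) 1 ×ˢ Set.univ := by
  intro p (hp : p.1 ^ 2 + p.2 ^ 2 < 1)
  simp only [Set.mem_prod, Set.mem_Ioo, Set.mem_univ, and_true]
  constructor <;> nlinarith [sq_nonneg p.2]

lemma openUnitDisk_subset_closedBall : openUnitDisk ⊆ Metric.closedBall 0 1 := by
  intro p (hp : p.1 ^ 2 + p.2 ^ 2 < 1)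
  rw [mem_closedBall_zero_iff, Prod.norm_def, max_le_iff, Real.norm_eq_abs, Real.norm_eq_abs,
    ← sq_le_one_iff_abs_le_one, ← sq_le_one_iff_abs_le_one]
  constructor <;> nlinarith [sq_nonneg p.1, sq_nonneg p.2]

lemma lintegral_inv_sqrt_one_sub_sq_sub_sq_slice_le (x : ℝ) :
    ∫⁻ y in {y | x ^ 2 + y ^ 2 < 1}, ENNReal.ofReal (1 / √(1 - x ^ 2 - y ^ 2)) ≤
      ENNReal.ofReal π := by
  by_cases hx : x ^ 2 < 1
  · set c := √(1 - x ^ 2)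
    have hc : 0 < c := sqrt_pos.2 (by linarith)
    have hc2 : c ^ 2 = 1 - x ^ 2 := sq_sqrt (by linarith)
    have hslice : {y | x ^ 2 + y ^ 2 < 1} = Set.Ioo (-c) c := by
      ext y
      simp only [Set.mem_ofPred_eq, Set.mem_Ioo, ← Real.sq_lt, c]
      constructor <;> intro h <;> linarith
    rw [hslice, ← integral_inv_sqrt_sq_sub_sq hc, ofReal_integral_eq_lintegral_ofReal
      (integrableOn_inv_sqrt_sq_sub_sq hc) (ae_of_all _ fun y => by positivity), ← hc2]
  · have hempty : {y : ℝ | x ^ 2 + y ^ 2 < 1} = ∅ := by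
      ext y
      simp only [Set.mem_ofPred_eq, Set.mem_empty_iff_false, iff_false, not_lt]
      nlinarith [sq_nonneg y]
    simp [hempty]

lemma integrableOn_inv_sqrt_one_sub_sq_sub_sq :
    IntegrableOn (fun p : ℝ × ℝ => 1 / √(1 - p.1 ^ 2 - p.2 ^ 2)) openUnitDisk := by
  set F := fun p : ℝ × ℝ => ENNReal.ofReal (1 / √(1 - p.1 ^ 2 - p.2 ^ 2))
  refine ⟨Measurable.aestronglyMeasurable (by fun_prop),
    (hasFiniteIntegral_iff_ofReal (ae_of_all _ fun p => by positivity)).2 ?_⟩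
  calc ∫⁻ p in openUnitDisk, F p
      = ∫⁻ p in Set.Ioo (-1) 1 ×ˢ Set.univ, openUnitDisk.indicator F p := by
        rw [setLIntegral_indicator measurableSet_openUnitDisk,
          Set.inter_eq_left.2 openUnitDisk_subset_Ioo_prod_univ]
    _ = ∫⁻ x in Set.Ioo (-1) 1, ∫⁻ y in {y | x ^ 2 + y ^ 2 < 1}, F (x, y) := by
        rw [Measure.volume_eq_prod, setLIntegral_prod _
          ((by fun_prop : Measurable F).indicator measurableSet_openUnitDisk).aemeasurable,
          Measure.restrict_univ]
        congr! 2 with x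
        exact lintegral_indicator (measurableSet_lt (by fun_prop) measurable_const) _
    _ ≤ ∫⁻ _ in Set.Ioo (-1 : ℝ) 1, ENNReal.ofReal π :=
        lintegral_mono lintegral_inv_sqrt_one_sub_sq_sub_sq_slice_le
    _ < ⊤ := by simp [Real.volume_Ioo, ENNReal.mul_lt_top]

lemma hasSum_integral_mul_inv_sqrt_one_sub_sq_sub_sq {g : ℝ × ℝ → ℝ} (hg : Continuous g) :
    HasSum (fun jk : ℕ × ℕ => ((jk.1 + jk.2).choose jk.1 : ℝ) * invSqrtCoeff (jk.1 + jk.2) *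
        ∫ p in openUnitDisk, p.1 ^ (2 * jk.1) * p.2 ^ (2 * jk.2) * g p)
      (∫ p in openUnitDisk, g p / √(1 - p.1 ^ 2 - p.2 ^ 2)) := by
  set w : ℕ × ℕ → ℝ × ℝ → ℝ := fun jk p => ((jk.1 + jk.2).choose jk.1 : ℝ) *
    invSqrtCoeff (jk.1 + jk.2) * ((p.1 ^ 2) ^ jk.1 * (p.2 ^ 2) ^ jk.2)
  have hw_nonneg (jk : ℕ × ℕ) (p : ℝ × ℝ) : 0 ≤ w jk p := by
    have := invSqrtCoeff_nonneg (jk.1 + jk.2); positivity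
  have hw (p : ℝ × ℝ) (hp : p ∈ openUnitDisk) :
      HasSum (fun jk => w jk p) (1 / √(1 - p.1 ^ 2 - p.2 ^ 2)) := by
    rw [sub_sub]
    exact hasSum_choose_mul_invSqrtCoeff_mul_pow_mul_pow (sq_nonneg _) (sq_nonneg _) hp
  obtain ⟨C, hC⟩ := (isCompact_closedBall (0 : ℝ × ℝ) 1).exists_bound_of_continuousOn
    hg.continuousOn
  have hD := measurableSet_openUnitDisk
  have hsum_integrals := hasSum_integral_of_dominated_convergence
    (μ := volume.restrict openUnitDisk)
    (F := fun jk p => g p * w jk p) (f := fun p => g p / √(1 - p.1 ^ 2 - p.2 ^ 2))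
    (fun jk p => C * w jk p) (fun jk => (by fun_prop : Continuous _).aestronglyMeasurable)
    (fun jk => ae_restrict_of_forall_mem hD fun p hp => by
      rw [norm_mul, Real.norm_of_nonneg (hw_nonneg jk p)]
      exact mul_le_mul_of_nonneg_right (hC p (openUnitDisk_subset_closedBall hp))
        (hw_nonneg jk p))
    (ae_restrict_of_forall_mem hD fun p hp => ((hw p hp).mul_left C).summable)
    (IntegrableOn.congr_fun (integrableOn_inv_sqrt_one_sub_sq_sub_sq.const_mul C)
      (fun p hp => ((hw p hp).mul_left C).tsum_eq.symm) hD)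
    (ae_restrict_of_forall_mem hD fun p hp => by
      simpa only [mul_one_div] using (hw p hp).mul_left (g p))
  refine hsum_integrals.congr_fun fun jk => ?_
  rw [← integral_const_mul]
  congr 1 with p
  simp only [w, pow_mul]
  ring

theorem binomial_expansion_and_series_for_disk_integral_general (n m : ℕ) (b₁ b₂ : ℝ) :
    (∀ (x₁ x₂ : ℝ) (s : ℕ), (x₁ ^ 2 + x₂ ^ 2) ^ s =
      ∑ j ∈ Finset.range (s + 1), (s.choose j : ℝ) * x₁ ^ (2 * j) * x₂ ^ (2 * (s - j))) ∧
    HasSum (fun jk : ℕ × ℕ =>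
        (((jk.1 + jk.2).choose jk.1 : ℝ) *
          (((2 * (jk.1 + jk.2) - 1)‼ : ℝ) / ((2 * (jk.1 + jk.2))‼ : ℝ))) *
          ∫ p in {p : ℝ × ℝ | p.1 ^ 2 + p.2 ^ 2 < 1},
            p.1 ^ (2 * jk.1 + n) * p.2 ^ (2 * jk.2 + m) *
              Real.exp (b₁ * p.1 ^ 2 + b₂ * p.2 ^ 2))
      (∫ p in {p : ℝ × ℝ | p.1 ^ 2 + p.2 ^ 2 < 1},
        p.1 ^ n * p.2 ^ m * Real.exp (b₁ * p.1 ^ 2 + b₂ * p.2 ^ 2) /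
          Real.sqrt (1 - p.1 ^ 2 - p.2 ^ 2)) := by
  refine ⟨add_sq_pow_eq_sum_choose, ?_⟩
  refine (hasSum_integral_mul_inv_sqrt_one_sub_sq_sub_sq
    (g := fun p => p.1 ^ n * p.2 ^ m * exp (b₁ * p.1 ^ 2 + b₂ * p.2 ^ 2)) (by fun_prop)).congr_fun
    fun jk => ?_
  congr 2 with p
  ring

theorem binomial_expansion_and_series_for_disk_integral (n m : ℕ) (b₁ b₂ : ℝ)
    (hb₁ : b₁ < 0) (hb₂ : b₂ < 0) :
    (∀ (x₁ x₂ : ℝ) (s : ℕ), (x₁ ^ 2 + x₂ ^ 2) ^ s =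
      ∑ j ∈ Finset.range (s + 1), (s.choose j : ℝ) * x₁ ^ (2 * j) * x₂ ^ (2 * (s - j))) ∧
    HasSum (fun jk : ℕ × ℕ =>
        (((jk.1 + jk.2).choose jk.1 : ℝ) *
          (((2 * (jk.1 + jk.2) - 1)‼ : ℝ) / ((2 * (jk.1 + jk.2))‼ : ℝ))) *
          ∫ p in {p : ℝ × ℝ | p.1 ^ 2 + p.2 ^ 2 < 1},
            p.1 ^ (2 * jk.1 + n) * p.2 ^ (2 * jk.2 + m) *
              Real.exp (b₁ * p.1 ^ 2 + b₂ * p.2 ^ 2))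
      (∫ p in {p : ℝ × ℝ | p.1 ^ 2 + p.2 ^ 2 < 1},
        p.1 ^ n * p.2 ^ m * Real.exp (b₁ * p.1 ^ 2 + b₂ * p.2 ^ 2) /
          Real.sqrt (1 - p.1 ^ 2 - p.2 ^ 2)) :=
  binomial_expansion_and_series_for_disk_integral_general n m b₁ b₂
end

section
/- For every natural number m and real b, ∫₀¹ r^m · exp(b·r²) / √(1−r²) dr = (√π/2) · Γ((m+1)/2)/Γ((m+2)/2) · ₁F₁((m+1)/2; (m+2)/2; b). -/
open Real MeasureTheory

/-- The confluent hypergeometric function `₁F₁(a; c; z)`. -/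
noncomputable def hyp1F1 (a c z : ℝ) : ℝ :=
  ∑' k : ℕ, ((ascPochhammer ℝ k).eval a / (ascPochhammer ℝ k).eval c) * z ^ k / (k.factorial : ℝ)

/-!
Expand `exp (b r²)` in its power series and integrate termwise, which is legitimate because
`|r²| ≤ 1` makes the series dominated by `exp |b| · rᵐ / √(1 - r²)`. The substitution `t = r²`
turns the `k`-th moment into the Beta integral `B((m + 2k + 1)/2, 1/2) / 2`, and
`Γ(a + k) = Γ(a) (a)ₖ` turns the resulting Gamma quotients into the coefficients of `₁F₁`.
-/

open Set

namespace Real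

theorem Gamma_add_nat_eq_mul_ascPochhammer {x : ℝ} (hx : 0 < x) (k : ℕ) :
    Gamma (x + k) = Gamma x * (ascPochhammer ℝ k).eval x := by
  induction k with
  | zero => simp
  | succ n ih =>
    rw [ascPochhammer_succ_eval, Nat.cast_succ, ← add_assoc, Gamma_add_one (by positivity), ih]
    ring

theorem Gamma_add_nat_div_Gamma_add_nat {a c : ℝ} (ha : 0 < a) (hc : 0 < c) (k : ℕ) :
    Gamma (a + k) / Gamma (c + k) =
      Gamma a / Gamma c * ((ascPochhammer ℝ k).eval a / (ascPochhammer ℝ k).eval c) := by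
  rw [Gamma_add_nat_eq_mul_ascPochhammer ha, Gamma_add_nat_eq_mul_ascPochhammer hc,
    mul_div_mul_comm]

private lemma ofReal_rpow_mul_one_sub_rpow {u v t : ℝ} (ht : t ∈ Ioc (0 : ℝ) 1) :
    (t : ℂ) ^ ((u : ℂ) - 1) * (1 - (t : ℂ)) ^ ((v : ℂ) - 1) =
      ((t ^ (u - 1) * (1 - t) ^ (v - 1) : ℝ) : ℂ) := by
  rw [Complex.ofReal_mul, Complex.ofReal_cpow ht.1.le, Complex.ofReal_cpow (sub_nonneg.2 ht.2)]
  push_cast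
  rfl

theorem integrableOn_rpow_mul_one_sub_rpow {u v : ℝ} (hu : 0 < u) (hv : 0 < v) :
    IntegrableOn (fun t : ℝ => t ^ (u - 1) * (1 - t) ^ (v - 1)) (Ioo 0 1) := by
  have h := Complex.betaIntegral_convergent (u := u) (v := v) (by simpa) (by simpa)
  rw [intervalIntegrable_iff_integrableOn_Ioc_of_le zero_le_one] at h
  have h' := (h.congr_fun (fun t ht => ofReal_rpow_mul_one_sub_rpow ht) measurableSet_Ioc).re
  have hIoc : IntegrableOn (fun t : ℝ => t ^ (u - 1) * (1 - t) ^ (v - 1)) (Ioc 0 1) := by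
    simpa [IntegrableOn] using h'
  exact hIoc.mono_set Ioo_subset_Ioc_self

theorem integral_rpow_mul_one_sub_rpow {u v : ℝ} (hu : 0 < u) (hv : 0 < v) :
    ∫ t in Ioo (0 : ℝ) 1, t ^ (u - 1) * (1 - t) ^ (v - 1) =
      Gamma u * Gamma v / Gamma (u + v) := by
  have h := Complex.betaIntegral_eq_Gamma_mul_div u v (by simpa) (by simpa)
  rw [Complex.betaIntegral, intervalIntegral.integral_of_le zero_le_one,
    setIntegral_congr_fun measurableSet_Ioc (fun t ht => ofReal_rpow_mul_one_sub_rpow ht),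
    integral_Ioc_eq_integral_Ioo, integral_complex_ofReal, ← Complex.ofReal_add,
    Complex.Gamma_ofReal, Complex.Gamma_ofReal, Complex.Gamma_ofReal] at h
  exact_mod_cast h

end Real

section SquareSubstitution

variable {E : Type*} [NormedAddCommGroup E] [NormedSpace ℝ E]

lemma image_sq_Ioo_zero_one : (fun r : ℝ => r ^ 2) '' Ioo 0 1 = Ioo 0 1 := by
  ext t
  constructor
  · rintro ⟨r, ⟨h0, h1⟩, rfl⟩
    exact ⟨by positivity, by nlinarith⟩
  · rintro ⟨h0, h1⟩
    exact ⟨√t, ⟨sqrt_pos.2 h0, (sqrt_lt' one_pos).2 (by simpa using h1)⟩, sq_sqrt h0.le⟩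

lemma injOn_sq_Ioo_zero_one : InjOn (fun r : ℝ => r ^ 2) (Ioo 0 1) :=
  (pow_left_strictMonoOn₀ two_ne_zero).injOn.mono fun _ hr => le_of_lt hr.1

lemma hasDerivWithinAt_sq_Ioo_zero_one :
    ∀ r ∈ Ioo (0 : ℝ) 1, HasDerivWithinAt (fun r : ℝ => r ^ 2) (2 * r) (Ioo 0 1) r :=
  fun r _ => by simpa using (hasDerivAt_pow 2 r).hasDerivWithinAt

lemma abs_two_mul_of_mem_Ioo {r : ℝ} (hr : r ∈ Ioo (0 : ℝ) 1) : |2 * r| = 2 * r :=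
  abs_of_pos (by linarith [hr.1])

theorem integrableOn_Ioo_two_mul_smul_comp_sq_iff (g : ℝ → E) :
    IntegrableOn (fun r => (2 * r) • g (r ^ 2)) (Ioo (0 : ℝ) 1) ↔
      IntegrableOn g (Ioo 0 1) := by
  have h := integrableOn_image_iff_integrableOn_abs_deriv_smul measurableSet_Ioo
    hasDerivWithinAt_sq_Ioo_zero_one injOn_sq_Ioo_zero_one g
  rw [image_sq_Ioo_zero_one] at h
  rw [h]
  exact integrableOn_congr_fun (fun r hr => by rw [abs_two_mul_of_mem_Ioo hr]) measurableSet_Ioo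

theorem integral_Ioo_two_mul_smul_comp_sq (g : ℝ → E) :
    ∫ r in Ioo (0 : ℝ) 1, (2 * r) • g (r ^ 2) = ∫ t in Ioo (0 : ℝ) 1, g t := by
  have h := integral_image_eq_integral_abs_deriv_smul measurableSet_Ioo
    hasDerivWithinAt_sq_Ioo_zero_one injOn_sq_Ioo_zero_one g
  rw [image_sq_Ioo_zero_one] at h
  rw [h]
  exact setIntegral_congr_fun measurableSet_Ioo (fun r hr => by rw [abs_two_mul_of_mem_Ioo hr])

end SquareSubstitution

lemma two_mul_smul_rpow_mul_one_sub_rpow_sq (n : ℕ) {r : ℝ} (hr : r ∈ Ioo (0 : ℝ) 1) :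
    (2 * r) • ((r ^ 2) ^ (((n : ℝ) + 1) / 2 - 1) * (1 - r ^ 2) ^ ((1 : ℝ) / 2 - 1) / 2) =
      r ^ n / √(1 - r ^ 2) := by
  have hr0 : 0 < r := hr.1
  have hsq : 0 < 1 - r ^ 2 := by nlinarith [hr.2]
  have hpow : (r ^ 2) ^ (((n : ℝ) + 1) / 2 - 1) = r ^ n / r := by
    rw [← rpow_natCast r 2, ← rpow_mul hr0.le, ← rpow_natCast, ← rpow_sub_one hr0.ne']
    ring_nf
  have hroot : (1 - r ^ 2) ^ ((1 : ℝ) / 2 - 1) = (√(1 - r ^ 2))⁻¹ := by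
    rw [sqrt_eq_rpow, ← rpow_neg hsq.le]
    norm_num
  rw [smul_eq_mul, hpow, hroot]
  field_simp

theorem integrableOn_pow_div_sqrt_one_sub_sq (n : ℕ) :
    IntegrableOn (fun r : ℝ => r ^ n / √(1 - r ^ 2)) (Ioo 0 1) := by
  refine (integrableOn_congr_fun (fun r hr => two_mul_smul_rpow_mul_one_sub_rpow_sq n hr)
    measurableSet_Ioo).1 ((integrableOn_Ioo_two_mul_smul_comp_sq_iff
      fun t => t ^ (((n : ℝ) + 1) / 2 - 1) * (1 - t) ^ ((1 : ℝ) / 2 - 1) / 2).2 ?_)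
  exact (integrableOn_rpow_mul_one_sub_rpow (by positivity) one_half_pos).div_const 2

theorem integral_pow_div_sqrt_one_sub_sq (n : ℕ) :
    ∫ r in Ioo (0 : ℝ) 1, r ^ n / √(1 - r ^ 2) =
      √π / 2 * (Gamma (((n : ℝ) + 1) / 2) / Gamma (((n : ℝ) + 2) / 2)) := by
  rw [← setIntegral_congr_fun measurableSet_Ioo
      (fun r hr => two_mul_smul_rpow_mul_one_sub_rpow_sq n hr),
    integral_Ioo_two_mul_smul_comp_sq
      fun t => t ^ (((n : ℝ) + 1) / 2 - 1) * (1 - t) ^ ((1 : ℝ) / 2 - 1) / 2, integral_div,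
    integral_rpow_mul_one_sub_rpow (by positivity) one_half_pos, Gamma_one_half_eq]
  ring_nf

theorem hasSum_integral_mul_exp {α : Type*} [MeasurableSpace α] {μ : Measure α}
    {f g : α → ℝ} (hf : Integrable f μ) (hg : AEStronglyMeasurable g μ)
    (hg_le : ∀ᵐ x ∂μ, |g x| ≤ 1) (b : ℝ) :
    HasSum (fun k : ℕ => b ^ k / k.factorial * ∫ x, f x * g x ^ k ∂μ)
      (∫ x, f x * exp (b * g x) ∂μ) := by
  have hpow_le (k : ℕ) : ∀ᵐ x ∂μ, ‖g x ^ k‖ ≤ 1 := by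
    filter_upwards [hg_le] with x hx
    simpa [norm_pow] using pow_le_one₀ (abs_nonneg _) hx
  have hint (k : ℕ) : Integrable (fun x => f x * g x ^ k) μ :=
    hf.mul_bdd (hg.pow k) (hpow_le k)
  have hnorm_le (k : ℕ) : ∫ x, ‖f x * g x ^ k‖ ∂μ ≤ ∫ x, ‖f x‖ ∂μ := by
    refine integral_mono_ae (hint k).norm hf.norm ?_
    filter_upwards [hpow_le k] with x hx
    rw [norm_mul]
    exact mul_le_of_le_one_right (norm_nonneg _) hx
  have hsum := hasSum_integral_of_summable_integral_norm
    (F := fun k x => b ^ k / k.factorial * (f x * g x ^ k)) (fun k => (hint k).const_mul _) ?_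
  · have hexp (x : α) :
        ∑' k : ℕ, b ^ k / k.factorial * (f x * g x ^ k) = f x * exp (b * g x) := by
      rw [exp_eq_exp_ℝ,
        ← ((NormedSpace.expSeries_div_hasSum_exp (b * g x)).mul_left (f x)).tsum_eq]
      congr 1 with k
      ring
    simpa only [integral_const_mul, hexp] using hsum
  · refine ((summable_pow_div_factorial |b|).mul_right (∫ x, ‖f x‖ ∂μ)).of_nonneg_of_le
      (fun k => integral_nonneg fun x => norm_nonneg _) fun k => ?_
    have hcoeff : ‖b ^ k / k.factorial‖ = |b| ^ k / k.factorial := by simp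
    simp_rw [norm_mul (b ^ k / _), integral_const_mul, hcoeff]
    exact mul_le_mul_of_nonneg_left (hnorm_le k) (by positivity)

theorem integral_pow_add_two_mul_div_sqrt_one_sub_sq (m k : ℕ) :
    ∫ r in Ioo (0 : ℝ) 1, r ^ (m + 2 * k) / √(1 - r ^ 2) =
      √π / 2 * (Gamma ((m + 1) / 2) / Gamma ((m + 2) / 2)) *
        ((ascPochhammer ℝ k).eval ((m + 1) / 2 : ℝ) /
          (ascPochhammer ℝ k).eval ((m + 2) / 2 : ℝ)) := by
  rw [integral_pow_div_sqrt_one_sub_sq, Nat.cast_add, Nat.cast_mul, Nat.cast_ofNat,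
    show ((m : ℝ) + 2 * k + 1) / 2 = (m + 1) / 2 + k by ring,
    show ((m : ℝ) + 2 * k + 2) / 2 = (m + 2) / 2 + k by ring,
    Gamma_add_nat_div_Gamma_add_nat (by positivity) (by positivity), mul_assoc]

theorem integral_pow_exp_sq_div_sqrt (m : ℕ) (b : ℝ) :
    ∫ r in Set.Ioo (0 : ℝ) 1, r ^ m * Real.exp (b * r ^ 2) / Real.sqrt (1 - r ^ 2) =
      (Real.sqrt π / 2) * (Real.Gamma ((m + 1) / 2) / Real.Gamma ((m + 2) / 2)) *
        hyp1F1 ((m + 1) / 2) ((m + 2) / 2) b := by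
  have hsq_le : ∀ᵐ r ∂volume.restrict (Ioo (0 : ℝ) 1), |r ^ 2| ≤ 1 :=
    ae_restrict_of_forall_mem measurableSet_Ioo fun r hr => by
      rw [abs_sq]; nlinarith [hr.1, hr.2]
  have hsum := hasSum_integral_mul_exp (integrableOn_pow_div_sqrt_one_sub_sq m)
    (continuous_pow 2).aestronglyMeasurable hsq_le b
  have hintegrand : (fun r : ℝ => r ^ m / √(1 - r ^ 2) * exp (b * r ^ 2)) =
      fun r => r ^ m * exp (b * r ^ 2) / √(1 - r ^ 2) := by
    funext r
    ring
  have hmoment (k : ℕ) : (fun r : ℝ => r ^ m / √(1 - r ^ 2) * (r ^ 2) ^ k) =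
      fun r => r ^ (m + 2 * k) / √(1 - r ^ 2) := by
    funext r
    ring
  simp only [hintegrand, hmoment, integral_pow_add_two_mul_div_sqrt_one_sub_sq] at hsum
  rw [← hsum.tsum_eq, hyp1F1, ← tsum_mul_left]
  congr 1 with k
  ring
end

section
/- Let Q be a nonzero real symmetric 3×3 matrix with trace zero, and define the biaxiality μ = 1 − 6·(tr Q³)²/(tr Q²)³. Then 0 ≤ μ ≤ 1, and μ = 0 if and only if Q has two equal eigenvalues (counted over its three eigenvalues). -/
open Matrix Finset

/-!
Diagonalising `Q`, all traces become power sums of the eigenvalues `λ₀, λ₁, λ₂`, which sum to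
zero. For such a triple `(∑ λᵢ²)³ - 6 (∑ λᵢ³)² = 2 Δ²`, where `Δ = ∏_{i<j} (λⱼ - λᵢ)` is the
Vandermonde determinant; this is twice the discriminant of the characteristic polynomial. Hence
`μ · (tr Q²)³ = 2 Δ² ≥ 0`, with equality exactly when two eigenvalues coincide.
-/

theorem Matrix.IsHermitian.trace_pow_eq_sum_eigenvalues_pow {𝕜 n : Type*} [RCLike 𝕜]
    [Fintype n] [DecidableEq n] {A : Matrix n n 𝕜} (hA : A.IsHermitian) (k : ℕ) :
    (A ^ k).trace = ∑ i, (hA.eigenvalues i : 𝕜) ^ k := by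
  conv_lhs => rw [hA.spectral_theorem, ← map_pow, Unitary.conjStarAlgAut_apply, trace_mul_cycle,
    Unitary.coe_star_mul_self, one_mul, diagonal_pow, trace_diagonal]
  rfl

theorem sum_sq_pow_three_sub_six_mul_sum_cube_sq {R : Type*} [CommRing R] {v : Fin 3 → R}
    (hv : ∑ i, v i = 0) :
    (∑ i, v i ^ 2) ^ 3 - 6 * (∑ i, v i ^ 3) ^ 2 = 2 * (vandermonde v).det ^ 2 := by
  have hv2 : v 2 = -(v 0 + v 1) :=
    eq_neg_of_add_eq_zero_right (by simpa [Fin.sum_univ_three] using hv)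
  simp only [Fin.sum_univ_three, det_fin_three, vandermonde_apply, Fin.val_zero, Fin.val_one,
    Fin.val_two, hv2]
  ring

theorem six_mul_sum_cube_sq_le_sum_sq_pow_three {v : Fin 3 → ℝ} (hv : ∑ i, v i = 0) :
    6 * (∑ i, v i ^ 3) ^ 2 ≤ (∑ i, v i ^ 2) ^ 3 := by
  have := sum_sq_pow_three_sub_six_mul_sum_cube_sq hv
  linarith [sq_nonneg (vandermonde v).det]

theorem six_mul_sum_cube_sq_eq_sum_sq_pow_three_iff {v : Fin 3 → ℝ} (hv : ∑ i, v i = 0) :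
    6 * (∑ i, v i ^ 3) ^ 2 = (∑ i, v i ^ 2) ^ 3 ↔ ∃ i j, i ≠ j ∧ v i = v j := by
  rw [eq_comm, ← sub_eq_zero, sum_sq_pow_three_sub_six_mul_sum_cube_sq hv]
  simp [det_vandermonde_eq_zero_iff, and_comm]

theorem sum_sq_pos_of_ne_zero {ι : Type*} [Fintype ι] {v : ι → ℝ} (hv : v ≠ 0) :
    0 < ∑ i, v i ^ 2 := by
  obtain ⟨i, hi⟩ := Function.ne_iff.mp hv
  exact sum_pos' (fun j _ => sq_nonneg _) ⟨i, mem_univ _, pow_two_pos_of_ne_zero hi⟩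

theorem biaxiality_bounds_and_uniaxial_iff (Q : Matrix (Fin 3) (Fin 3) ℝ)
    (hQ : Q.IsHermitian) (hQ0 : Q ≠ 0) (htr : Q.trace = 0) :
    0 ≤ 1 - 6 * (Q ^ 3).trace ^ 2 / (Q ^ 2).trace ^ 3 ∧
    1 - 6 * (Q ^ 3).trace ^ 2 / (Q ^ 2).trace ^ 3 ≤ 1 ∧
    (1 - 6 * (Q ^ 3).trace ^ 2 / (Q ^ 2).trace ^ 3 = 0 ↔
      ∃ i j : Fin 3, i ≠ j ∧ hQ.eigenvalues i = hQ.eigenvalues j) := by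
  have hsum : ∑ i, hQ.eigenvalues i = 0 := by simpa [hQ.trace_eq_sum_eigenvalues] using htr
  have hpos : 0 < (∑ i, hQ.eigenvalues i ^ 2) ^ 3 :=
    pow_pos (sum_sq_pos_of_ne_zero (hQ.eigenvalues_eq_zero_iff.not.mpr hQ0)) 3
  simp only [hQ.trace_pow_eq_sum_eigenvalues_pow, RCLike.ofReal_real_eq_id, id]
  have hle : 6 * (∑ i, hQ.eigenvalues i ^ 3) ^ 2 / (∑ i, hQ.eigenvalues i ^ 2) ^ 3 ≤ 1 :=
    div_le_one_of_le₀ (six_mul_sum_cube_sq_le_sum_sq_pow_three hsum) hpos.le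
  have hnonneg : 0 ≤ 6 * (∑ i, hQ.eigenvalues i ^ 3) ^ 2 / (∑ i, hQ.eigenvalues i ^ 2) ^ 3 := by
    positivity
  refine ⟨by linarith, by linarith, ?_⟩
  rw [sub_eq_zero, eq_comm, div_eq_one_iff_eq hpos.ne',
    six_mul_sum_cube_sq_eq_sum_sq_pow_three_iff hsum]
end
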